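/- If a finite group G admits a 1-rotational k-factorization F of the complete graph on G ∪ {∞}, then the G-stabilizers of the factors in F are pairwise conjugate subgroups of G, and each has order k. -/

import Mathlib

open SimpleGraph

/-- The image of a graph on `G ∪ {∞}` under right multiplication by `g` (with `∞ g = ∞`). -/
def shiftG {G : Type*} [Group G] (F : SimpleGraph (Option G)) (g : G) :
    SimpleGraph (Option G) :=
  F.map (Equiv.optionCongr (Equiv.mulRight g)).toEmbedding

/-- The `G`-stabilizer of a graph on `G ∪ {∞}`. -/
def stabG {G : Type*} [Group G] (F : SimpleGraph (Option G)) : Set G :=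
  {g | shiftG F g = F}

/-- A `k`-factor: a spanning `k`-regular subgraph of the complete graph. -/
def IsKFactor {V : Type*} (k : ℕ) (F : SimpleGraph V) : Prop :=
  ∀ v : V, (F.neighborSet v).ncard = k

/-- A `k`-factorization: a set of `k`-factors whose edges partition the complete graph. -/
def IsKFactorization {V : Type*} (k : ℕ) (𝓕 : Set (SimpleGraph V)) : Prop :=
  (∀ F ∈ 𝓕, IsKFactor k F) ∧
  ∀ u v : V, u ≠ v → ∃! F, F ∈ 𝓕 ∧ F.Adj u v

/-- A family of graphs on `G ∪ {∞}` is `1`-rotational if it is closed under the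
right multiplication action of `G`. -/
def IsRotational {G : Type*} [Group G] (𝓕 : Set (SimpleGraph (Option G))) : Prop :=
  ∀ F ∈ 𝓕, ∀ g : G, shiftG F g ∈ 𝓕

/-! The factor containing a given edge is unique. Since right multiplication by `g` carries
the edge `{∞, a}` to `{∞, a g}`, the map `g ↦ a g` identifies the stabilizer of a factor
containing `{∞, a}` with the neighbourhood of `∞`, which has `k` elements; and any two factors
differ by such a shift, so their stabilizers are conjugate. -/

section Shift

variable {G : Type*} [Group G] (F : SimpleGraph (Option G))

theorem shiftG_eq_comap (g : G) : shiftG F g = F.comap (Option.map (· * g⁻¹)) := by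
  rw [shiftG, ← comap_symm]
  rfl

@[simp]
theorem shiftG_adj (g : G) (u v : Option G) :
    (shiftG F g).Adj u v ↔ F.Adj (u.map (· * g⁻¹)) (v.map (· * g⁻¹)) := by
  rw [shiftG_eq_comap, comap_adj]

@[simp]
theorem shiftG_one : shiftG F 1 = F := by
  ext u v
  simp [Option.map_id']

theorem shiftG_shiftG (g h : G) : shiftG (shiftG F g) h = shiftG F (g * h) := by
  ext u v
  simp [Option.map_map, Function.comp_def, mul_assoc]

theorem shiftG_shiftG_inv (g : G) : shiftG (shiftG F g) g⁻¹ = F := by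
  rw [shiftG_shiftG, mul_inv_cancel, shiftG_one]

def stabSubgroup : Subgroup G where
  carrier := stabG F
  one_mem' := shiftG_one F
  mul_mem' {a b} ha hb := by
    change shiftG F (a * b) = F
    rw [← shiftG_shiftG, ha, hb]
  inv_mem' {a} ha := by
    change shiftG F a⁻¹ = F
    conv_lhs => rw [← ha]
    exact shiftG_shiftG_inv F a

theorem stabG_shiftG (g : G) :
    stabG (shiftG F g) = (fun x => g⁻¹ * x * g) '' stabG F := by
  ext x
  constructor
  · intro hx
    refine ⟨g * x * g⁻¹, ?_, by group⟩
    change shiftG F (g * x * g⁻¹) = F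
    rw [← shiftG_shiftG, ← shiftG_shiftG, hx, shiftG_shiftG_inv]
  · rintro ⟨y, hy, rfl⟩
    change shiftG (shiftG F g) (g⁻¹ * y * g) = shiftG F g
    rw [shiftG_shiftG, show g * (g⁻¹ * y * g) = y * g by group, ← shiftG_shiftG, hy]

end Shift

theorem IsKFactorization.eq_of_adj {V : Type*} {k : ℕ} {𝓕 : Set (SimpleGraph V)}
    (hfac : IsKFactorization k 𝓕) {F F' : SimpleGraph V} (hF : F ∈ 𝓕) (hF' : F' ∈ 𝓕)
    {u v : V} (h : F.Adj u v) (h' : F'.Adj u v) : F = F' :=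
  (hfac.2 u v h.ne).unique ⟨hF, h⟩ ⟨hF', h'⟩

section Rotational

variable {G : Type*} [Group G] {k : ℕ} {𝓕 : Set (SimpleGraph (Option G))}
  {F F' : SimpleGraph (Option G)}

theorem IsKFactorization.shiftG_eq_of_adj_none (hfac : IsKFactorization k 𝓕)
    (hrot : IsRotational 𝓕) (hF : F ∈ 𝓕) (hF' : F' ∈ 𝓕) {a g : G}
    (ha : F.Adj none (some a)) (h' : F'.Adj none (some (a * g))) : shiftG F g = F' :=
  hfac.eq_of_adj (hrot F hF g) hF' (by simpa using ha) h'

theorem IsKFactorization.stabG_eq_preimage (hfac : IsKFactorization k 𝓕)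
    (hrot : IsRotational 𝓕) (hF : F ∈ 𝓕) {a : G} (ha : F.Adj none (some a)) :
    stabG F = (fun g => some (a * g)) ⁻¹' F.neighborSet none := by
  ext g
  constructor
  · intro hg
    change shiftG F g = F at hg
    rw [Set.mem_preimage, mem_neighborSet, ← hg]
    simpa using ha
  · exact hfac.shiftG_eq_of_adj_none hrot hF hF ha

theorem IsKFactorization.ncard_stabG (hfac : IsKFactorization k 𝓕)
    (hrot : IsRotational 𝓕) (hF : F ∈ 𝓕) {a : G} (ha : F.Adj none (some a)) :
    (stabG F).ncard = k := by
  rw [hfac.stabG_eq_preimage hrot hF ha, Set.ncard_preimage_of_injective_subset_range,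
    hfac.1 F hF none]
  · exact fun x y h => mul_left_cancel (Option.some_injective _ h)
  · rintro (_ | b) hb
    · exact absurd hb F.irrefl
    · exact ⟨a⁻¹ * b, by simp⟩

-- `ncard` is `0` on infinite sets; finiteness is what makes `k` positive here.
theorem IsKFactorization.exists_adj_none [Finite G] (hfac : IsKFactorization k 𝓕)
    (hF : F ∈ 𝓕) : ∃ a : G, F.Adj none (some a) := by
  obtain ⟨F₀, ⟨hF₀, h₀⟩, -⟩ := hfac.2 none (some 1) (Option.some_ne_none 1).symm
  have : (F.neighborSet none).Nonempty := by
    rw [← Set.ncard_pos, hfac.1 F hF, ← hfac.1 F₀ hF₀ none, Set.ncard_pos]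
    exact ⟨_, h₀⟩
  obtain ⟨_ | a, ha⟩ := this
  · exact absurd ha F.irrefl
  · exact ⟨a, ha⟩

theorem IsKFactorization.exists_shiftG_eq [Finite G] (hfac : IsKFactorization k 𝓕)
    (hrot : IsRotational 𝓕) (hF : F ∈ 𝓕) (hF' : F' ∈ 𝓕) : ∃ g : G, shiftG F g = F' := by
  obtain ⟨a, ha⟩ := hfac.exists_adj_none hF
  obtain ⟨b, hb⟩ := hfac.exists_adj_none hF'
  exact ⟨a⁻¹ * b, hfac.shiftG_eq_of_adj_none hrot hF hF' ha (by simpa using hb)⟩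

end Rotational

theorem stmt2 {G : Type*} [Group G] [Fintype G] (k : ℕ)
    (𝓕 : Set (SimpleGraph (Option G)))
    (hfac : IsKFactorization k 𝓕) (hrot : IsRotational 𝓕) :
    (∀ F ∈ 𝓕, ∃ S : Subgroup G, (S : Set G) = stabG F ∧ Nat.card S = k) ∧
    ∀ F₁ ∈ 𝓕, ∀ F₂ ∈ 𝓕, ∃ g : G, stabG F₂ = (fun x => g⁻¹ * x * g) '' stabG F₁ := by
  refine ⟨fun F hF => ?_, fun F₁ hF₁ F₂ hF₂ => ?_⟩
  · obtain ⟨a, ha⟩ := hfac.exists_adj_none hF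
    exact ⟨stabSubgroup F, rfl, (Nat.card_coe_set_eq _).trans (hfac.ncard_stabG hrot hF ha)⟩
  · obtain ⟨g, rfl⟩ := hfac.exists_shiftG_eq hrot hF₁ hF₂
    exact ⟨g, stabG_shiftG F₁ g⟩
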